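/- For n ≥ 3, let L_{n,i} (3 ≤ i ≤ n) be the set of linked partitions of {1,...,n} in which vertex i is a destination, vertex i-1 is not a destination, and (i-1, i) is not an arc. Then Σ_{i=3}^{n} Σ_{τ ∈ L_{n,i}} a^{one(τ)} b^{os(τ)-1} = [ (n-2)ab + C(n-2,2)(a+b) + C(n-2,3) ] · (a+b)_{n-3}. -/

import Mathlib

open Finset Polynomial
open scoped Classical

/-! ### Tree-like tableaux (grid model)
A cell is a pair (row index, column index), both 0-based.  A Ferrers diagram
is a finite lower set of cells.  A tree-like tableau of size `n` is a pair
`(F, P)` where `P` is the set of pointed cells of the diagram `F`. -/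

def IsFerrersGrid (F : Finset (ℕ × ℕ)) : Prop :=
  ∀ p ∈ F, ∀ i j : ℕ, i ≤ p.1 → j ≤ p.2 → (i, j) ∈ F

def IsTLT (F P : Finset (ℕ × ℕ)) : Prop :=
  F.Nonempty ∧ IsFerrersGrid F ∧ P ⊆ F ∧ (0, 0) ∈ P ∧
  (∀ p ∈ P, p ≠ (0, 0) →
    Xor' (∃ i < p.1, (i, p.2) ∈ P) (∃ j < p.2, (p.1, j) ∈ P)) ∧
  (∀ p ∈ F, ∃ q ∈ P, q.1 = p.1) ∧
  (∀ p ∈ F, ∃ q ∈ P, q.2 = p.2)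

/-- The finite set of tree-like tableaux of size `n`. -/
noncomputable def TLT (n : ℕ) : Finset (Finset (ℕ × ℕ) × Finset (ℕ × ℕ)) :=
  ((Finset.range n ×ˢ Finset.range n).powerset ×ˢ
    (Finset.range n ×ˢ Finset.range n).powerset).filter
    (fun T => IsTLT T.1 T.2 ∧ T.2.card = n)

/-- number of non-root points in the topmost row -/
noncomputable def topT (P : Finset (ℕ × ℕ)) : ℕ :=
  (P.filter (fun p => p.1 = 0 ∧ p.2 ≠ 0)).card
/-- number of non-root points in the leftmost column -/
noncomputable def leftT (P : Finset (ℕ × ℕ)) : ℕ :=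
  (P.filter (fun p => p.2 = 0 ∧ p.1 ≠ 0)).card
/-- corners of a Ferrers diagram -/
noncomputable def cornersT (F : Finset (ℕ × ℕ)) : Finset (ℕ × ℕ) :=
  F.filter (fun p => (p.1 + 1, p.2) ∉ F ∧ (p.1, p.2 + 1) ∉ F)
/-- non-occupied corners -/
noncomputable def nocT (F P : Finset (ℕ × ℕ)) : ℕ :=
  ((cornersT F).filter (fun p => p ∉ P)).card
/-- occupied corners -/
noncomputable def ocT (F P : Finset (ℕ × ℕ)) : ℕ :=
  ((cornersT F).filter (fun p => p ∈ P)).card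
/-- symmetric (invariant under reflection across the main diagonal) -/
def IsSymTLT (F P : Finset (ℕ × ℕ)) : Prop :=
  F.image Prod.swap = F ∧ P.image Prod.swap = P

/-! ### Alternative tableaux (border-label model)
A Ferrers diagram of size `n` (empty rows and columns allowed) is encoded by
the set `C ⊆ {1,…,n}` of its column labels (labels of the south-east border
steps, read from north-east to south-west); the remaining labels are row
labels.  Row `r` and column `c` intersect in a cell (written `(r, c)`)
exactly when `r < c`.  Inside a row, cells further to the left have *larger*
column labels; inside a column, cells further up have *smaller* row labels.
An alternative tableau is `(C, L, U)` where `L` (resp. `U`) is the set of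
cells containing a left (resp. up) arrow. -/

def IsAT (n : ℕ) (C : Finset ℕ) (L U : Finset (ℕ × ℕ)) : Prop :=
  C ⊆ Finset.Icc 1 n ∧ Disjoint L U ∧
  (∀ p ∈ L ∪ U, p.1 ∈ Finset.Icc 1 n ∧ p.1 ∉ C ∧ p.2 ∈ C ∧ p.1 < p.2) ∧
  (∀ p ∈ L, ∀ c' : ℕ, p.2 < c' → (p.1, c') ∉ L ∪ U) ∧
  (∀ p ∈ U, ∀ r' : ℕ, r' < p.1 → (r', p.2) ∉ L ∪ U)

/-- the finite set of alternative tableaux of size `n` -/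
noncomputable def ATset (n : ℕ) :
    Finset (Finset ℕ × Finset (ℕ × ℕ) × Finset (ℕ × ℕ)) :=
  ((Finset.Icc 1 n).powerset ×ˢ
    ((Finset.Icc 1 n ×ˢ Finset.Icc 1 n).powerset ×ˢ
      (Finset.Icc 1 n ×ˢ Finset.Icc 1 n).powerset)).filter
    (fun T => IsAT n T.1 T.2.1 T.2.2)

/-- alternative tableaux of size `n` in which every column contains an up arrow -/
noncomputable def ATstar (n : ℕ) :
    Finset (Finset ℕ × Finset (ℕ × ℕ) × Finset (ℕ × ℕ)) :=
  (ATset n).filter (fun T => ∀ c ∈ T.1, ∃ p ∈ T.2.2, p.2 = c)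

/-- label of the topmost row -/
noncomputable def topRowA (n : ℕ) (C : Finset ℕ) : ℕ :=
  WithTop.untopD 0 ((Finset.Icc 1 n \ C).min)
/-- number of arrows in the topmost row -/
noncomputable def topA (n : ℕ) (C : Finset ℕ) (L U : Finset (ℕ × ℕ)) : ℕ :=
  ((L ∪ U).filter (fun p => p.1 = topRowA n C)).card
/-- number of unrestricted rows (rows with no left arrow) -/
noncomputable def urrA (n : ℕ) (C : Finset ℕ) (L : Finset (ℕ × ℕ)) : ℕ :=
  ((Finset.Icc 1 n \ C).filter (fun r => ∀ p ∈ L, p.1 ≠ r)).card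
/-- number of non-occupied corners (the corners are exactly the cells `(c-1, c)`
with `c` a column label and `c-1` a row label) -/
noncomputable def nocA (n : ℕ) (C : Finset ℕ) (L U : Finset (ℕ × ℕ)) : ℕ :=
  (C.filter (fun c => c - 1 ∈ Finset.Icc 1 n \ C ∧ (c - 1, c) ∉ L ∪ U)).card
/-- symmetric alternative tableau of size `2n` (reflection across the main
diagonal exchanges border label `k` with `2n+1-k`, rows with columns and
left arrows with up arrows) -/
def IsSymAT (n : ℕ) (C : Finset ℕ) (L U : Finset (ℕ × ℕ)) : Prop :=
  (∀ k ∈ Finset.Icc 1 (2 * n), (k ∈ C ↔ (2 * n + 1 - k) ∉ C)) ∧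
  (∀ r c : ℕ, (r, c) ∈ L ↔ (2 * n + 1 - c, 2 * n + 1 - r) ∈ U)

/-! ### Linked partitions (linear representation / arc model)
A linked partition of `{1,…,n}` is identified with its set of arcs `(i, j)`,
`i < j`: each vertex is the right-hand endpoint of at most one arc. -/

def IsLP (n : ℕ) (A : Finset (ℕ × ℕ)) : Prop :=
  (∀ p ∈ A, 1 ≤ p.1 ∧ p.1 < p.2 ∧ p.2 ≤ n) ∧
  (∀ p ∈ A, ∀ q ∈ A, p.2 = q.2 → p.1 = q.1)

noncomputable def LP (n : ℕ) : Finset (Finset (ℕ × ℕ)) :=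
  ((Finset.Icc 1 n ×ˢ Finset.Icc 1 n).powerset).filter (IsLP n)

/-- number of origins plus singletons (= vertices with no incoming arc) -/
noncomputable def osL (n : ℕ) (A : Finset (ℕ × ℕ)) : ℕ :=
  ((Finset.Icc 1 n).filter (fun j => ∀ p ∈ A, p.2 ≠ j)).card
/-- number of arcs with left-hand endpoint `1` -/
noncomputable def oneL (A : Finset (ℕ × ℕ)) : ℕ :=
  (A.filter (fun p => p.1 = 1)).card
/-- a destination: only a right-hand endpoint -/
def IsDest (A : Finset (ℕ × ℕ)) (j : ℕ) : Prop :=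
  (∃ p ∈ A, p.2 = j) ∧ ∀ p ∈ A, p.1 ≠ j

/-- consecutive pairs of a finite set of naturals -/
noncomputable def consecPairs (S : Finset ℕ) : Finset (ℕ × ℕ) :=
  (S ×ˢ S).filter (fun p => p.1 < p.2 ∧ ∀ k ∈ S, ¬(p.1 < k ∧ k < p.2))

/-- the set of row labels of cells of column `c` containing an arrow -/
noncomputable def colRows (L U : Finset (ℕ × ℕ)) (c : ℕ) : Finset ℕ :=
  ((L ∪ U).filter (fun p => p.2 = c)).image Prod.fst

/-- the map `Φ`: for each column `j`, with the up arrow in row `i₁` and the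
left arrows in rows `i₂ < … < i_t`, draw the arcs `(i₁,i₂), …, (i_{t-1},i_t), (i_t, j)`,
i.e. the consecutive pairs of `{i₁,…,i_t, j}`. -/
noncomputable def Phi (T : Finset ℕ × Finset (ℕ × ℕ) × Finset (ℕ × ℕ)) :
    Finset (ℕ × ℕ) :=
  T.1.biUnion (fun c => consecPairs (insert c (colRows T.2.1 T.2.2 c)))

/-! ### Type B alternative tableaux
Encoded by `(C, L, U)` with `C ⊆ Icc 1 n` the set of column labels of the
subdiagram; rows of the shifted diagram are labelled by
`(Icc 1 n \ C) ∪ (-C)`, rows higher up having smaller labels.  Row `x` and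
column `c` intersect in a cell exactly when (`x > 0` and `x < c`) or
(`x < 0` and `-x ≤ c`); the cell `(-c, c)` is the diagonal cell of row `-c`. -/

def cellB (n : ℕ) (C : Finset ℤ) (x c : ℤ) : Prop :=
  c ∈ C ∧ ((1 ≤ x ∧ x ≤ (n : ℤ) ∧ x ∉ C ∧ x < c) ∨ (x < 0 ∧ -x ∈ C ∧ -x ≤ c))

def IsATB (n : ℕ) (C : Finset ℤ) (L U : Finset (ℤ × ℤ)) : Prop :=
  C ⊆ Finset.Icc 1 (n : ℤ) ∧ Disjoint L U ∧
  (∀ p ∈ L ∪ U, p.2 ∈ C ∧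
    ((1 ≤ p.1 ∧ p.1 ≤ (n : ℤ) ∧ p.1 ∉ C ∧ p.1 < p.2) ∨
      (p.1 < 0 ∧ -p.1 ∈ C ∧ -p.1 < p.2))) ∧
  (∀ p ∈ L, ∀ c' : ℤ, p.2 < c' → (p.1, c') ∉ L ∪ U) ∧
  (∀ p ∈ U, ∀ x' : ℤ, x' < p.1 → (x', p.2) ∉ L ∪ U) ∧
  (∀ i ∈ C, (∃ p ∈ U, p.2 = i) → ∀ c' : ℤ, (-i, c') ∉ L ∪ U)

noncomputable def ATB (n : ℕ) :
    Finset (Finset ℤ × Finset (ℤ × ℤ) × Finset (ℤ × ℤ)) :=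
  ((Finset.Icc (1 : ℤ) (n : ℤ)).powerset ×ˢ
    ((Finset.Icc (-(n : ℤ)) (n : ℤ) ×ˢ Finset.Icc (1 : ℤ) (n : ℤ)).powerset ×ˢ
      (Finset.Icc (-(n : ℤ)) (n : ℤ) ×ˢ Finset.Icc (1 : ℤ) (n : ℤ)).powerset)).filter
    (fun T => IsATB n T.1 T.2.1 T.2.2)

/-- the row labels of a type B alternative tableau -/
noncomputable def rowsB (n : ℕ) (C : Finset ℤ) : Finset ℤ :=
  (Finset.Icc (1 : ℤ) (n : ℤ) \ C) ∪ C.image (fun c => -c)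

/-- number of unrestricted rows: row `x` is unrestricted when it contains no
left arrow and column `|x|` (if it exists) contains no up arrow -/
noncomputable def urrB (n : ℕ) (C : Finset ℤ) (L U : Finset (ℤ × ℤ)) : ℕ :=
  ((rowsB n C).filter (fun x => (∀ p ∈ L, p.1 ≠ x) ∧ ∀ p ∈ U, p.2 ≠ |x|)).card

/-- the corners of the shifted Ferrers diagram -/
noncomputable def cornersB (n : ℕ) (C : Finset ℤ) : Finset (ℤ × ℤ) :=
  (Finset.Icc (-(n : ℤ)) (n : ℤ) ×ˢ Finset.Icc (1 : ℤ) (n : ℤ)).filter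
    (fun p => cellB n C p.1 p.2 ∧ (∀ x' : ℤ, p.1 < x' → ¬ cellB n C x' p.2) ∧
      (∀ c' : ℤ, c' < p.2 → ¬ cellB n C p.1 c'))

/-- number of non-occupied diagonal corners -/
noncomputable def nocDiagB (n : ℕ) (C : Finset ℤ) (L U : Finset (ℤ × ℤ)) : ℕ :=
  ((cornersB n C).filter (fun p => p.1 = -p.2 ∧ p ∉ L ∪ U)).card
/-- number of non-occupied non-diagonal corners -/
noncomputable def nocOffB (n : ℕ) (C : Finset ℤ) (L U : Finset (ℤ × ℤ)) : ℕ :=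
  ((cornersB n C).filter (fun p => p.1 ≠ -p.2 ∧ p ∉ L ∪ U)).card

/-! ### Type B linked partitions
A pair `(V, A)`: for each `i ∈ {1,…,n}` exactly one of `i, -i` belongs to
the vertex set `V`; `A` is the set of arcs `(x, y)`, `x < y`, with each
vertex the right-hand endpoint of at most one arc. -/

def IsLPB (n : ℕ) (V : Finset ℤ) (A : Finset (ℤ × ℤ)) : Prop :=
  (∀ v ∈ V, 1 ≤ |v| ∧ |v| ≤ (n : ℤ)) ∧
  (∀ i ∈ Finset.Icc (1 : ℤ) (n : ℤ), ((i ∈ V ∧ -i ∉ V) ∨ (-i ∈ V ∧ i ∉ V))) ∧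
  (∀ p ∈ A, p.1 ∈ V ∧ p.2 ∈ V ∧ p.1 < p.2) ∧
  (∀ p ∈ A, ∀ q ∈ A, p.2 = q.2 → p.1 = q.1)

noncomputable def LPB (n : ℕ) : Finset (Finset ℤ × Finset (ℤ × ℤ)) :=
  ((Finset.Icc (-(n : ℤ)) (n : ℤ)).powerset ×ˢ
    (Finset.Icc (-(n : ℤ)) (n : ℤ) ×ˢ Finset.Icc (-(n : ℤ)) (n : ℤ)).powerset).filter
    (fun T => IsLPB n T.1 T.2)

/-- number of origins plus singletons (= vertices with no incoming arc) -/
noncomputable def osB (V : Finset ℤ) (A : Finset (ℤ × ℤ)) : ℕ :=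
  (V.filter (fun v => ∀ p ∈ A, p.2 ≠ v)).card

/-- a legal destination: `j` is only a right-hand endpoint, and its incoming
arc `(a, j)` satisfies `|a| < |j|` -/
def IsLegalDestB (A : Finset (ℤ × ℤ)) (j : ℤ) : Prop :=
  (∃ p ∈ A, p.2 = j ∧ |p.1| < |j|) ∧ ∀ p ∈ A, p.1 ≠ j

/-- consecutive pairs of a finite set of integers -/
noncomputable def consecPairsZ (S : Finset ℤ) : Finset (ℤ × ℤ) :=
  (S ×ˢ S).filter (fun p => p.1 < p.2 ∧ ∀ k ∈ S, ¬(p.1 < k ∧ k < p.2))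

/-- row labels of cells of column `c` containing an arrow -/
noncomputable def colRowsB (L U : Finset (ℤ × ℤ)) (c : ℤ) : Finset ℤ :=
  ((L ∪ U).filter (fun p => p.2 = c)).image Prod.fst

/-- column `c` contains an up arrow -/
def HasUp (U : Finset (ℤ × ℤ)) (c : ℤ) : Prop := ∃ p ∈ U, p.2 = c

/-- the map `Φ_B`: columns with an up arrow give positive vertices and chains
of arcs through their arrows (consecutive pairs of the arrow rows together
with the column label); columns without an up arrow give negative vertices
`-j` and arcs from `-j` to each row containing a left arrow of that column;
rows give positive vertices. -/
noncomputable def PhiB (n : ℕ) (T : Finset ℤ × Finset (ℤ × ℤ) × Finset (ℤ × ℤ)) :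
    Finset ℤ × Finset (ℤ × ℤ) :=
  ((Finset.Icc (1 : ℤ) (n : ℤ) \ T.1) ∪ T.1.filter (fun c => HasUp T.2.2 c) ∪
      (T.1.filter (fun c => ¬ HasUp T.2.2 c)).image (fun c => -c),
    (T.1.filter (fun c => HasUp T.2.2 c)).biUnion
        (fun c => consecPairsZ (insert c (colRowsB T.2.1 T.2.2 c))) ∪
      (T.1.filter (fun c => ¬ HasUp T.2.2 c)).biUnion
        (fun c => (colRowsB T.2.1 T.2.2 c).image (fun r => (-c, r))))

noncomputable def srcA (A : Finset (ℕ × ℕ)) (j : ℕ) : ℕ :=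
  (A.filter (fun p => p.2 = j)).sup Prod.fst

lemma mem_LP {n : ℕ} {A : Finset (ℕ × ℕ)} : A ∈ LP n ↔ IsLP n A := by
  unfold LP
  simp only [mem_filter, mem_powerset, and_iff_right_iff_imp]
  intro h
  intro p hp
  have h1 := h.1 p hp
  simp only [Finset.mem_product, Finset.mem_Icc]
  omega

lemma srcA_eq {n : ℕ} {A : Finset (ℕ × ℕ)} (h : IsLP n A) {p : ℕ × ℕ} (hp : p ∈ A) :
    srcA A p.2 = p.1 := by
  have hf : A.filter (fun q => q.2 = p.2) = {p} := by
    ext q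
    simp only [mem_filter, mem_singleton]
    constructor
    · rintro ⟨hq, hq2⟩
      exact Prod.ext (h.2 q hq p hp hq2) hq2
    · rintro rfl; exact ⟨hp, rfl⟩
  rw [srcA, hf, Finset.sup_singleton]

lemma srcA_eq_zero {n : ℕ} {A : Finset (ℕ × ℕ)} (h : IsLP n A) (j : ℕ) :
    srcA A j = 0 ↔ ∀ p ∈ A, p.2 ≠ j := by
  constructor
  · intro h0 p hp hpj
    have := srcA_eq h hp
    rw [hpj, h0] at this
    have := (h.1 p hp).1
    omega
  · intro hall
    have : A.filter (fun p => p.2 = j) = ∅ := by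
      apply Finset.filter_eq_empty_iff.mpr
      intro p hp
      exact hall p hp
    rw [srcA, this, Finset.sup_empty]
    rfl

lemma srcA_mem {n : ℕ} {A : Finset (ℕ × ℕ)} (h : IsLP n A) {j : ℕ}
    (hj : srcA A j ≠ 0) : (srcA A j, j) ∈ A := by
  by_cases hex : ∃ p ∈ A, p.2 = j
  · obtain ⟨p, hp, hpj⟩ := hex
    have := srcA_eq h hp
    rw [hpj] at this
    rw [this, ← hpj]
    exact hp
  · push_neg at hex
    exact absurd ((srcA_eq_zero h j).mpr hex) hj

lemma srcA_lt {n : ℕ} {A : Finset (ℕ × ℕ)} (h : IsLP n A) {j : ℕ}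
    (hj : srcA A j ≠ 0) : srcA A j < j ∧ j ≤ n :=
  ⟨(h.1 _ (srcA_mem h hj)).2.1, (h.1 _ (srcA_mem h hj)).2.2⟩


lemma LP_small {n : ℕ} (hn : n ≤ 1) : LP n = {∅} := by
  ext A
  simp only [Finset.mem_singleton]
  rw [mem_LP]
  constructor
  · intro h
    by_contra hne
    obtain ⟨p, hp⟩ := Finset.nonempty_of_ne_empty hne
    have := h.1 p hp
    omega
  · rintro rfl
    exact ⟨fun p hp => absurd hp (Finset.notMem_empty p),
           fun p hp => absurd hp (Finset.notMem_empty p)⟩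

lemma lp_sum (n : ℕ) (w : ℕ → ℕ → ℤ) :
    ∑ A ∈ LP n, ∏ j ∈ Icc 2 n, w j (srcA A j)
      = ∏ j ∈ Icc 2 n, ∑ v ∈ range j, w j v := by
  induction n with
  | zero => rw [LP_small (by norm_num)]; simp
  | succ m ih =>
    rcases Nat.eq_zero_or_pos m with rfl | hm
    · rw [LP_small le_rfl]; simp
    -- m ≥ 1
    have hins : Icc 2 (m + 1) = insert (m + 1) (Icc 2 m) := by
      ext k; simp only [mem_Icc, mem_insert]; omega
    have hnotmem : (m + 1) ∉ Icc 2 m := by simp [mem_Icc]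
    rw [hins, Finset.prod_insert hnotmem, ← ih]
    rw [Finset.sum_mul_sum]
    rw [← Finset.sum_product']
    apply Finset.sum_nbij' (i := fun A => (srcA A (m+1), A.filter (fun p => p.2 ≠ m+1)))
      (j := fun q => if q.1 = 0 then q.2 else insert (q.1, m+1) q.2)
    · -- hi : maps into
      intro A hA
      have h := mem_LP.mp hA
      simp only [Finset.mem_product, Finset.mem_range]
      constructor
      · by_cases h0 : srcA A (m+1) = 0
        · omega
        · exact lt_of_lt_of_le (srcA_lt h h0).1 le_rfl
      · rw [mem_LP]
        constructor
        · intro p hp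
          simp only [mem_filter] at hp
          have := h.1 p hp.1
          omega
        · intro p hp q hq
          simp only [mem_filter] at hp hq
          exact h.2 p hp.1 q hq.1
    · -- hj : maps back
      rintro ⟨v, B⟩ hq
      simp only [Finset.mem_product, Finset.mem_range] at hq
      obtain ⟨hv, hB⟩ := hq
      have hB' := mem_LP.mp hB
      rw [mem_LP]
      by_cases h0 : v = 0
      · simp only [h0, if_pos rfl]
        exact ⟨fun p hp => by have := hB'.1 p hp; omega, hB'.2⟩
      · simp only [if_neg h0]
        constructor
        · intro p hp
          rcases Finset.mem_insert.mp hp with rfl | hp'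
          · simp; omega
          · have := hB'.1 p hp'; omega
        · intro p hp q hq hpq
          rcases Finset.mem_insert.mp hp with rfl | hp' <;>
            rcases Finset.mem_insert.mp hq with rfl | hq'
          · rfl
          · have := hB'.1 q hq'; simp at hpq ⊢; omega
          · have := hB'.1 p hp'; simp at hpq; omega
          · exact hB'.2 p hp' q hq' hpq
    · -- left inverse
      intro A hA
      have h := mem_LP.mp hA
      by_cases h0 : srcA A (m+1) = 0
      · rw [if_pos h0]
        rw [Finset.filter_eq_self]
        intro p hp
        exact (srcA_eq_zero h (m+1)).mp h0 p hp
      · simp only [if_neg h0]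
        ext p
        simp only [Finset.mem_insert, mem_filter]
        constructor
        · rintro (rfl | ⟨hp, _⟩)
          · exact srcA_mem h h0
          · exact hp
        · intro hp
          by_cases hp2 : p.2 = m + 1
          · left
            have := srcA_eq h hp
            rw [hp2] at this
            exact Prod.ext this.symm hp2
          · right; exact ⟨hp, hp2⟩
    · -- right inverse
      rintro ⟨v, B⟩ hq
      simp only [Finset.mem_product, Finset.mem_range] at hq
      obtain ⟨hv, hB⟩ := hq
      have hB' := mem_LP.mp hB
      have hBno : ∀ p ∈ B, p.2 ≠ m + 1 := by
        intro p hp; have := hB'.1 p hp; omega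
      by_cases h0 : v = 0
      · rw [if_pos h0]
        have h1 : srcA B (m+1) = 0 := (srcA_eq_zero hB' (m+1)).mpr hBno
        have h2 : B.filter (fun p => p.2 ≠ m+1) = B := Finset.filter_eq_self.mpr hBno
        rw [h1, h2, h0]
      · simp only [if_neg h0]
        set A := insert (v, m+1) B with hAdef
        have hALP : IsLP (m+1) A := by
          constructor
          · intro p hp
            rcases Finset.mem_insert.mp hp with rfl | hp'
            · simp; omega
            · have := hB'.1 p hp'; omega
          · intro p hp q hq hpq
            rcases Finset.mem_insert.mp hp with rfl | hp' <;>
              rcases Finset.mem_insert.mp hq with rfl | hq'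
            · rfl
            · have := hB'.1 q hq'; simp at hpq ⊢; omega
            · have := hB'.1 p hp'; simp at hpq; omega
            · exact hB'.2 p hp' q hq' hpq
        have h1 : srcA A (m+1) = v := srcA_eq hALP (Finset.mem_insert_self _ _)
        have h2 : A.filter (fun p => p.2 ≠ m+1) = B := by
          ext p
          simp only [mem_filter, hAdef, Finset.mem_insert]
          constructor
          · rintro ⟨rfl | hp, hne⟩
            · simp at hne
            · exact hp
          · intro hp
            exact ⟨Or.inr hp, hBno p hp⟩
        rw [h1, h2]
    · -- value equality
      intro A hA
      have h := mem_LP.mp hA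
      rw [Finset.prod_insert hnotmem]
      congr 1
      apply Finset.prod_congr rfl
      intro j hj
      simp only [mem_Icc] at hj
      congr 1
      -- srcA A j = srcA (A.filter (p.2 ≠ m+1)) j
      unfold srcA
      congr 1
      ext p
      simp only [mem_filter]
      constructor
      · rintro ⟨hp, rfl⟩
        exact ⟨⟨hp, by omega⟩, rfl⟩
      · rintro ⟨⟨hp, _⟩, rfl⟩
        exact ⟨hp, rfl⟩


noncomputable def w0 (a b : ℤ) (v : ℕ) : ℤ :=
  if v = 0 then b else if v = 1 then a else 1

lemma oneL_eq {n : ℕ} {A : Finset (ℕ × ℕ)} (h : IsLP n A) :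
    oneL A = ((Icc 2 n).filter (fun j => srcA A j = 1)).card := by
  rw [oneL]
  have himg : (A.filter (fun p => p.1 = 1)).image Prod.snd
      = (Icc 2 n).filter (fun j => srcA A j = 1) := by
    ext j
    simp only [Finset.mem_image, mem_filter, mem_Icc]
    constructor
    · rintro ⟨p, ⟨hp, hp1⟩, rfl⟩
      have hb := h.1 p hp
      have := srcA_eq h hp
      exact ⟨⟨by omega, hb.2.2⟩, by rw [this, hp1]⟩
    · rintro ⟨⟨h2, hn'⟩, hsrc⟩
      refine ⟨(1, j), ⟨?_, rfl⟩, rfl⟩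
      have : (srcA A j, j) ∈ A := srcA_mem h (by omega)
      rwa [hsrc] at this
  rw [← himg, Finset.card_image_of_injOn]
  intro p hp q hq hpq
  simp only [Finset.coe_filter, Set.mem_setOf_eq] at hp hq
  exact Prod.ext (hp.2.trans hq.2.symm) hpq

lemma osL_eq {n : ℕ} (hn : 1 ≤ n) {A : Finset (ℕ × ℕ)} (h : IsLP n A) :
    osL n A = 1 + ((Icc 2 n).filter (fun j => srcA A j = 0)).card := by
  rw [osL]
  have h1 : Icc 1 n = insert 1 (Icc 2 n) := by
    ext k; simp only [mem_Icc, mem_insert]; omega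
  rw [h1, Finset.filter_insert, if_pos]
  · rw [Finset.card_insert_of_notMem (by simp [mem_Icc])]
    rw [Nat.add_comm]
    congr 1
    refine congrArg Finset.card ?_
    apply Finset.filter_congr
    intro j hj
    rw [srcA_eq_zero h j]
  · intro p hp hp1
    have := h.1 p hp
    omega

lemma weight_eq {n : ℕ} (hn : 1 ≤ n) {A : Finset (ℕ × ℕ)} (h : IsLP n A) (a b : ℤ) :
    a ^ oneL A * b ^ (osL n A - 1) = ∏ j ∈ Icc 2 n, w0 a b (srcA A j) := by
  rw [oneL_eq h, osL_eq hn h, Nat.add_sub_cancel_left]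
  rw [← Finset.prod_filter_mul_prod_filter_not (Icc 2 n) (fun j => srcA A j = 0)]
  have hz : ∏ j ∈ (Icc 2 n).filter (fun j => srcA A j = 0), w0 a b (srcA A j)
      = b ^ ((Icc 2 n).filter (fun j => srcA A j = 0)).card := by
    rw [← Finset.prod_const]
    apply Finset.prod_congr rfl
    intro j hj
    simp only [mem_filter] at hj
    rw [w0, if_pos hj.2]
  rw [hz]
  have hnz : ∏ j ∈ (Icc 2 n).filter (fun j => ¬srcA A j = 0), w0 a b (srcA A j)
      = a ^ ((Icc 2 n).filter (fun j => srcA A j = 1)).card := by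
    rw [← Finset.prod_filter_mul_prod_filter_not
      ((Icc 2 n).filter (fun j => ¬srcA A j = 0)) (fun j => srcA A j = 1)]
    have e1 : ∏ j ∈ ((Icc 2 n).filter (fun j => ¬srcA A j = 0)).filter
        (fun j => srcA A j = 1), w0 a b (srcA A j)
        = a ^ ((Icc 2 n).filter (fun j => srcA A j = 1)).card := by
      rw [Finset.filter_filter]
      have : (Icc 2 n).filter (fun j => ¬srcA A j = 0 ∧ srcA A j = 1)
          = (Icc 2 n).filter (fun j => srcA A j = 1) := by
        apply Finset.filter_congr
        intro j hj
        constructor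
        · exact fun hh => hh.2
        · exact fun hh => ⟨by omega, hh⟩
      rw [this, ← Finset.prod_const]
      apply Finset.prod_congr rfl
      intro j hj
      simp only [mem_filter] at hj
      rw [w0, if_neg (by omega), if_pos hj.2]
    have e2 : ∏ j ∈ ((Icc 2 n).filter (fun j => ¬srcA A j = 0)).filter
        (fun j => ¬srcA A j = 1), w0 a b (srcA A j) = 1 := by
      apply Finset.prod_eq_one
      intro j hj
      simp only [mem_filter] at hj
      rw [w0, if_neg hj.1.2, if_neg hj.2]
    rw [e1, e2, mul_one]
  rw [hnz, mul_comm]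


noncomputable def wT (a b : ℤ) (i : ℕ) : ℕ → ℕ → ℤ := fun j v =>
  if j = i then (if 1 ≤ v ∧ v + 2 ≤ i then w0 a b v else 0)
  else if i < j then (if v = i then 0 else w0 a b v)
  else w0 a b v

noncomputable def wD (a b : ℤ) (i : ℕ) : ℕ → ℕ → ℤ := fun j v =>
  if j = i then (if 1 ≤ v ∧ v + 2 ≤ i then w0 a b v else 0)
  else if j = i - 1 then (if v = 0 then 0 else w0 a b v)
  else if i < j then (if v = i ∨ v = i - 1 then 0 else w0 a b v)
  else w0 a b v

noncomputable def Pr (x : ℤ) (m : ℕ) : ℤ := ∏ k ∈ Finset.range m, (x + (k : ℤ))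

lemma pochh_eq (x : ℤ) (m : ℕ) : (ascPochhammer ℤ m).eval x = Pr x m := by
  induction m with
  | zero => simp [Pr, ascPochhammer_zero]
  | succ k ih =>
    rw [ascPochhammer_succ_right, Polynomial.eval_mul, ih, Pr, Pr,
      Finset.prod_range_succ]
    simp

lemma sum_w0_range (a b : ℤ) {j : ℕ} (hj : 2 ≤ j) :
    ∑ v ∈ range j, w0 a b v = a + b + (j : ℤ) - 2 := by
  induction j, hj using Nat.le_induction with
  | base => simp [Finset.sum_range_succ, w0]; ring
  | succ j hj ih =>
    rw [Finset.sum_range_succ, ih]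
    have : w0 a b j = 1 := by rw [w0, if_neg (by omega), if_neg (by omega)]
    rw [this]
    push_cast
    ring

lemma sum_Icc_w0 (a b : ℤ) {t : ℕ} (ht : 1 ≤ t) :
    ∑ v ∈ Icc 1 t, w0 a b v = a + (t : ℤ) - 1 := by
  induction t, ht using Nat.le_induction with
  | base => simp [w0]
  | succ t ht ih =>
    rw [show Icc 1 (t+1) = insert (t+1) (Icc 1 t) by ext k; simp [mem_Icc]; omega,
      Finset.sum_insert (by simp [mem_Icc]), ih]
    have : w0 a b (t+1) = 1 := by rw [w0, if_neg (by omega), if_neg (by omega)]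
    rw [this]
    push_cast
    ring

lemma sum_mid (a b : ℤ) {i : ℕ} (hi : 3 ≤ i) :
    ∑ v ∈ range i, (if 1 ≤ v ∧ v + 2 ≤ i then w0 a b v else 0)
      = a + (i : ℤ) - 3 := by
  rw [Finset.sum_ite, Finset.sum_const_zero, add_zero]
  have : (range i).filter (fun v => 1 ≤ v ∧ v + 2 ≤ i) = Icc 1 (i - 2) := by
    ext v; simp only [mem_filter, mem_range, mem_Icc]; omega
  rw [this, sum_Icc_w0 a b (by omega)]
  have : ((i - 2 : ℕ) : ℤ) = (i : ℤ) - 2 := by omega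
  rw [this]; ring

lemma sum_gt_T (a b : ℤ) {i j : ℕ} (hi : 3 ≤ i) (hij : i < j) :
    ∑ v ∈ range j, (if v = i then 0 else w0 a b v) = a + b + (j : ℤ) - 3 := by
  have key : ∀ v ∈ range j, (if v = i then 0 else w0 a b v)
      = w0 a b v - (if v = i then w0 a b v else 0) := by
    intro v _
    by_cases h : v = i <;> simp [h]
  rw [Finset.sum_congr rfl key, Finset.sum_sub_distrib, sum_w0_range a b (by omega),
    Finset.sum_ite_eq' (range j) i (w0 a b), if_pos (by simp [mem_range]; omega)]
  have : w0 a b i = 1 := by rw [w0, if_neg (by omega), if_neg (by omega)]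
  rw [this]; ring

lemma sum_gt_D (a b : ℤ) {i j : ℕ} (hi : 3 ≤ i) (hij : i < j) :
    ∑ v ∈ range j, (if v = i ∨ v = i - 1 then 0 else w0 a b v)
      = a + b + (j : ℤ) - 4 := by
  have key : ∀ v ∈ range j, (if v = i ∨ v = i - 1 then 0 else w0 a b v)
      = w0 a b v - (if v = i then w0 a b v else 0)
        - (if v = i - 1 then w0 a b v else 0) := by
    intro v _
    by_cases h1 : v = i
    · subst h1; rw [if_pos (Or.inl rfl), if_pos rfl, if_neg (by omega)]; ring
    · by_cases h2 : v = i - 1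
      · subst h2; rw [if_pos (Or.inr rfl), if_neg h1, if_pos rfl]; ring
      · rw [if_neg (by tauto), if_neg h1, if_neg h2]; ring
  rw [Finset.sum_congr rfl key]
  rw [Finset.sum_sub_distrib, Finset.sum_sub_distrib, sum_w0_range a b (by omega),
    Finset.sum_ite_eq' (range j) i (w0 a b), if_pos (by simp [mem_range]; omega),
    Finset.sum_ite_eq' (range j) (i-1) (w0 a b), if_pos (by simp [mem_range]; omega)]
  have h1 : w0 a b i = 1 := by rw [w0, if_neg (by omega), if_neg (by omega)]
  have h2 : w0 a b (i-1) = 1 := by rw [w0, if_neg (by omega), if_neg (by omega)]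
  rw [h1, h2]; ring

lemma sum_ne0 (a b : ℤ) {j : ℕ} (hj : 2 ≤ j) :
    ∑ v ∈ range j, (if v = 0 then 0 else w0 a b v) = a + (j : ℤ) - 2 := by
  have key : ∀ v ∈ range j, (if v = 0 then 0 else w0 a b v)
      = w0 a b v - (if v = 0 then w0 a b v else 0) := by
    intro v _
    by_cases h : v = 0 <;> simp [h]
  rw [Finset.sum_congr rfl key, Finset.sum_sub_distrib, sum_w0_range a b hj,
    Finset.sum_ite_eq' (range j) 0 (w0 a b), if_pos (by simp [mem_range]; omega)]
  have : w0 a b 0 = b := by rw [w0, if_pos rfl]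
  rw [this]; ring


lemma prod_T (a b : ℤ) {i n : ℕ} (hi : 3 ≤ i) (hin : i ≤ n) :
    ∏ j ∈ Icc 2 n, (∑ v ∈ range j, wT a b i j v)
      = (a + (i : ℤ) - 3) * Pr (a + b) (n - 2) := by
  have hIcc : Icc 2 n = Ico 2 (n+1) := by ext k; simp only [mem_Icc, mem_Ico]; omega
  rw [hIcc]
  rw [← Finset.prod_Ico_consecutive _ (show 2 ≤ i by omega) (show i ≤ n+1 by omega)]
  rw [← Finset.prod_Ico_consecutive _ (show i ≤ i+1 by omega) (show i+1 ≤ n+1 by omega)]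
  have h1 : ∏ j ∈ Ico 2 i, (∑ v ∈ range j, wT a b i j v) = Pr (a+b) (i-2) := by
    rw [Finset.prod_Ico_eq_prod_range]
    unfold Pr
    rw [show i - 2 = i - 2 from rfl]
    apply Finset.prod_congr rfl
    intro k hk
    simp only [mem_range] at hk
    have hs : ∀ v, wT a b i (2+k) v = w0 a b v := by
      intro v
      simp only [wT]
      rw [if_neg (by omega), if_neg (by omega)]
    rw [Finset.sum_congr rfl (fun v _ => hs v), sum_w0_range a b (by omega)]
    push_cast
    ring
  have h2 : ∏ j ∈ Ico i (i+1), (∑ v ∈ range j, wT a b i j v) = a + (i:ℤ) - 3 := by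
    rw [Nat.Ico_succ_singleton, Finset.prod_singleton]
    have hs : ∀ v, wT a b i i v = (if 1 ≤ v ∧ v + 2 ≤ i then w0 a b v else 0) := by
      intro v
      simp only [wT]
      simp
    rw [Finset.sum_congr rfl (fun v _ => hs v), sum_mid a b hi]
  have h3 : ∏ j ∈ Ico (i+1) (n+1), (∑ v ∈ range j, wT a b i j v)
      = ∏ k ∈ range (n - i), (a + b + (i:ℤ) - 2 + k) := by
    rw [Finset.prod_Ico_eq_prod_range]
    rw [show n + 1 - (i+1) = n - i by omega]
    apply Finset.prod_congr rfl
    intro k hk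
    have hs : ∀ v, wT a b i (i+1+k) v = (if v = i then 0 else w0 a b v) := by
      intro v
      simp only [wT]
      rw [if_neg (by omega), if_pos (by omega)]
    rw [Finset.sum_congr rfl (fun v _ => hs v), sum_gt_T a b hi (by omega)]
    push_cast
    ring
  have hcomb : Pr (a+b) (i-2) * (∏ k ∈ range (n - i), (a + b + (i:ℤ) - 2 + k))
      = Pr (a+b) (n-2) := by
    unfold Pr
    rw [show n - 2 = (i-2) + (n-i) by omega, Finset.prod_range_add]
    congr 1
    apply Finset.prod_congr rfl
    intro k _
    have : ((i - 2 + k : ℕ) : ℤ) = (i:ℤ) - 2 + k := by omega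
    rw [this]
    ring
  rw [h1, h2, h3]
  linear_combination (a + (i:ℤ) - 3) * hcomb

lemma prod_D (a b : ℤ) {i n : ℕ} (hi : 3 ≤ i) (hin : i ≤ n) :
    ∏ j ∈ Icc 2 n, (∑ v ∈ range j, wD a b i j v)
      = (a + (i : ℤ) - 3) * (a + (i : ℤ) - 3) * Pr (a + b) (n - 3) := by
  have hIcc : Icc 2 n = Ico 2 (n+1) := by ext k; simp only [mem_Icc, mem_Ico]; omega
  rw [hIcc]
  rw [← Finset.prod_Ico_consecutive _ (show 2 ≤ i - 1 by omega) (show i - 1 ≤ n+1 by omega)]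
  rw [← Finset.prod_Ico_consecutive _ (show i - 1 ≤ i by omega) (show i ≤ n+1 by omega)]
  rw [← Finset.prod_Ico_consecutive _ (show i ≤ i+1 by omega) (show i+1 ≤ n+1 by omega)]
  have h1 : ∏ j ∈ Ico 2 (i-1), (∑ v ∈ range j, wD a b i j v) = Pr (a+b) (i-3) := by
    rw [Finset.prod_Ico_eq_prod_range]
    unfold Pr
    rw [show i - 1 - 2 = i - 3 by omega]
    apply Finset.prod_congr rfl
    intro k hk
    simp only [mem_range] at hk
    have hs : ∀ v, wD a b i (2+k) v = w0 a b v := by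
      intro v
      simp only [wD]
      rw [if_neg (by omega), if_neg (by omega), if_neg (by omega)]
    rw [Finset.sum_congr rfl (fun v _ => hs v), sum_w0_range a b (by omega)]
    push_cast
    ring
  have h2 : ∏ j ∈ Ico (i-1) i, (∑ v ∈ range j, wD a b i j v) = a + (i:ℤ) - 3 := by
    rw [show Ico (i-1) i = {i-1} by ext k; simp only [mem_Ico, mem_singleton]; omega,
      Finset.prod_singleton]
    have hs : ∀ v, wD a b i (i-1) v = (if v = 0 then 0 else w0 a b v) := by
      intro v
      simp only [wD]
      rw [if_neg (show ¬(i - 1 = i) by omega)]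
      simp
    rw [Finset.sum_congr rfl (fun v _ => hs v), sum_ne0 a b (by omega)]
    have : ((i - 1 : ℕ) : ℤ) = (i:ℤ) - 1 := by omega
    rw [this]
    ring
  have h3 : ∏ j ∈ Ico i (i+1), (∑ v ∈ range j, wD a b i j v) = a + (i:ℤ) - 3 := by
    rw [Nat.Ico_succ_singleton, Finset.prod_singleton]
    have hs : ∀ v, wD a b i i v = (if 1 ≤ v ∧ v + 2 ≤ i then w0 a b v else 0) := by
      intro v
      simp only [wD]
      simp
    rw [Finset.sum_congr rfl (fun v _ => hs v), sum_mid a b hi]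
  have h4 : ∏ j ∈ Ico (i+1) (n+1), (∑ v ∈ range j, wD a b i j v)
      = ∏ k ∈ range (n - i), (a + b + (i:ℤ) - 3 + k) := by
    rw [Finset.prod_Ico_eq_prod_range]
    rw [show n + 1 - (i+1) = n - i by omega]
    apply Finset.prod_congr rfl
    intro k hk
    have hs : ∀ v, wD a b i (i+1+k) v = (if v = i ∨ v = i - 1 then 0 else w0 a b v) := by
      intro v
      simp only [wD]
      rw [if_neg (by omega), if_neg (by omega), if_pos (by omega)]
    rw [Finset.sum_congr rfl (fun v _ => hs v), sum_gt_D a b hi (by omega)]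
    push_cast
    ring
  have hcomb : Pr (a+b) (i-3) * (∏ k ∈ range (n - i), (a + b + (i:ℤ) - 3 + k))
      = Pr (a+b) (n-3) := by
    unfold Pr
    rw [show n - 3 = (i-3) + (n-i) by omega, Finset.prod_range_add]
    congr 1
    apply Finset.prod_congr rfl
    intro k _
    have : ((i - 3 + k : ℕ) : ℤ) = (i:ℤ) - 3 + k := by omega
    rw [this]
    ring
  rw [h1, h2, h3, h4]
  linear_combination (a + (i:ℤ) - 3) * (a + (i:ℤ) - 3) * hcomb


lemma isDest_iff {n : ℕ} {A : Finset (ℕ × ℕ)} (h : IsLP n A) {t : ℕ} (ht : 1 ≤ t) :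
    IsDest A t ↔ (srcA A t ≠ 0 ∧ ∀ j ∈ Icc 2 n, t < j → srcA A j ≠ t) := by
  constructor
  · rintro ⟨⟨p, hp, hp2⟩, hnot⟩
    constructor
    · subst hp2
      rw [srcA_eq h hp]
      have := h.1 p hp
      omega
    · intro j hj hij hsrc
      have hA : (t, j) ∈ A := by
        have := srcA_mem h (hsrc ▸ (by omega : t ≠ 0) : srcA A j ≠ 0)
        rwa [hsrc] at this
      exact hnot (t, j) hA rfl
  · rintro ⟨h0, hall⟩
    constructor
    · exact ⟨(srcA A t, t), srcA_mem h h0, rfl⟩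
    · intro p hp hp1
      have hb := h.1 p hp
      have hj : p.2 ∈ Icc 2 n := by simp only [mem_Icc]; omega
      have : srcA A p.2 = t := by rw [srcA_eq h hp, hp1]
      exact hall p.2 hj (by omega) this

lemma arc_iff {n : ℕ} {A : Finset (ℕ × ℕ)} (h : IsLP n A) {i : ℕ} (hi : 3 ≤ i)
    (h0 : srcA A i ≠ 0) : (i - 1, i) ∈ A ↔ srcA A i = i - 1 := by
  constructor
  · intro hmem
    have := srcA_eq h hmem
    simpa using this
  · intro heq
    have := srcA_mem h h0
    rwa [heq] at this

lemma pointwise {n i : ℕ} (hi : 3 ≤ i) (hin : i ≤ n) {A : Finset (ℕ × ℕ)}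
    (h : IsLP n A) (a b : ℤ) :
    (∏ j ∈ Icc 2 n, wT a b i j (srcA A j)) - (∏ j ∈ Icc 2 n, wD a b i j (srcA A j))
      = if (IsDest A i ∧ ¬ IsDest A (i - 1) ∧ (i - 1, i) ∉ A)
          then ∏ j ∈ Icc 2 n, w0 a b (srcA A j) else 0 := by
  have himem : i ∈ Icc 2 n := by simp only [mem_Icc]; omega
  by_cases hQ : (1 ≤ srcA A i ∧ srcA A i + 2 ≤ i) ∧
      (∀ j ∈ Icc 2 n, i < j → srcA A j ≠ i)
  · -- Q holds : wT-product equals w0-product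
    have hTw : ∏ j ∈ Icc 2 n, wT a b i j (srcA A j)
        = ∏ j ∈ Icc 2 n, w0 a b (srcA A j) := by
      apply Finset.prod_congr rfl
      intro j hj
      by_cases hji : j = i
      · subst hji
        simp only [wT]
        rw [if_true, if_pos hQ.1]
      · by_cases hij : i < j
        · simp only [wT]
          rw [if_neg hji, if_pos hij, if_neg (hQ.2 j hj hij)]
        · simp only [wT]
          rw [if_neg hji, if_neg hij]
    -- Q implies IsDest A i ∧ (i-1,i) ∉ A
    have hdesti : IsDest A i := by
      rw [isDest_iff h (by omega)]
      exact ⟨by omega, hQ.2⟩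
    have harc : (i - 1, i) ∉ A := by
      rw [arc_iff h hi (by omega)]
      omega
    by_cases hd : IsDest A (i - 1)
    · -- both products equal w0-product, difference 0
      rw [if_neg (by tauto)]
      have hDw : ∏ j ∈ Icc 2 n, wD a b i j (srcA A j)
          = ∏ j ∈ Icc 2 n, w0 a b (srcA A j) := by
        apply Finset.prod_congr rfl
        intro j hj
        rw [isDest_iff h (by omega : 1 ≤ i - 1)] at hd
        by_cases hji : j = i
        · subst hji
          simp only [wD]
          rw [if_true, if_pos hQ.1]
        · by_cases hji1 : j = i - 1
          · subst hji1
            simp only [wD]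
            rw [if_neg hji, if_true, if_neg hd.1]
          · by_cases hij : i < j
            · simp only [wD]
              rw [if_neg hji, if_neg hji1, if_pos hij,
                if_neg (by push_neg; exact ⟨hQ.2 j hj hij, hd.2 j hj (by omega)⟩)]
            · simp only [wD]
              rw [if_neg hji, if_neg hji1, if_neg hij]
      rw [hTw, hDw, sub_self]
    · -- wD-product is 0
      rw [if_pos ⟨hdesti, hd, harc⟩, hTw]
      have hDz : ∏ j ∈ Icc 2 n, wD a b i j (srcA A j) = 0 := by
        rw [isDest_iff h (by omega : 1 ≤ i - 1)] at hd
        push_neg at hd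
        by_cases h01 : srcA A (i - 1) = 0
        · apply Finset.prod_eq_zero (show i - 1 ∈ Icc 2 n by simp [mem_Icc]; omega)
          simp only [wD]
          rw [if_neg (by omega), if_true, if_pos h01]
        · obtain ⟨j, hj, hij, hsrc⟩ := hd h01
          have hjne : j ≠ i := by
            intro hji; subst hji
            omega
          have hijlt : i < j := by
            rcases Nat.lt_or_ge i j with hlt | hge
            · exact hlt
            · exfalso
              have : j = i := by omega
              exact hjne this
          apply Finset.prod_eq_zero hj
          simp only [wD]
          rw [if_neg hjne, if_neg (by omega), if_pos hijlt, if_pos (Or.inr hsrc)]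
      rw [hDz, sub_zero]
  · -- Q fails : both products are zero, and the condition fails
    have hcond : ¬(IsDest A i ∧ ¬ IsDest A (i - 1) ∧ (i - 1, i) ∉ A) := by
      rintro ⟨hdest, _, harc⟩
      apply hQ
      rw [isDest_iff h (by omega)] at hdest
      refine ⟨⟨by omega, ?_⟩, hdest.2⟩
      have hlt := (srcA_lt h hdest.1).1
      have hne : srcA A i ≠ i - 1 := by
        intro heq
        exact harc ((arc_iff h hi hdest.1).mpr heq)
      omega
    rw [if_neg hcond]
    -- find a zero coordinate for wT, which is also zero for wD
    have hzero : ∃ j ∈ Icc 2 n, wT a b i j (srcA A j) = 0 ∧ wD a b i j (srcA A j) = 0 := by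
      push_neg at hQ
      by_cases hc1 : 1 ≤ srcA A i ∧ srcA A i + 2 ≤ i
      · obtain ⟨j, hj, hij, hsrc⟩ := hQ hc1
        refine ⟨j, hj, ?_, ?_⟩
        · simp only [wT]
          rw [if_neg (by omega), if_pos hij, if_pos hsrc]
        · simp only [wD]
          rw [if_neg (by omega), if_neg (by omega), if_pos hij, if_pos (Or.inl hsrc)]
      · refine ⟨i, himem, ?_, ?_⟩
        · simp only [wT]
          rw [if_true, if_neg hc1]
        · simp only [wD]
          rw [if_true, if_neg hc1]
    obtain ⟨j, hj, hT0, hD0⟩ := hzero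
    rw [Finset.prod_eq_zero hj hT0, Finset.prod_eq_zero hj hD0, sub_zero]


lemma Si {n i : ℕ} (hi : 3 ≤ i) (hin : i ≤ n) (a b : ℤ) :
    ∑ A ∈ (LP n).filter
        (fun A => IsDest A i ∧ ¬ IsDest A (i - 1) ∧ (i - 1, i) ∉ A),
      a ^ oneL A * b ^ (osL n A - 1)
    = (a + (i : ℤ) - 3) * (b + (n : ℤ) - i) * Pr (a + b) (n - 3) := by
  rw [Finset.sum_filter]
  have step : ∀ A ∈ LP n,
      (if (IsDest A i ∧ ¬ IsDest A (i - 1) ∧ (i - 1, i) ∉ A)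
        then a ^ oneL A * b ^ (osL n A - 1) else 0)
      = (∏ j ∈ Icc 2 n, wT a b i j (srcA A j))
        - (∏ j ∈ Icc 2 n, wD a b i j (srcA A j)) := by
    intro A hA
    have h := mem_LP.mp hA
    rw [pointwise hi hin h a b]
    by_cases hc : IsDest A i ∧ ¬ IsDest A (i - 1) ∧ (i - 1, i) ∉ A
    · rw [if_pos hc, if_pos hc, weight_eq (by omega) h a b]
    · rw [if_neg hc, if_neg hc]
  rw [Finset.sum_congr rfl step, Finset.sum_sub_distrib, lp_sum, lp_sum,
    prod_T a b hi hin, prod_D a b hi hin]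
  have hPr : Pr (a + b) (n - 2) = Pr (a + b) (n - 3) * (a + b + ((n : ℤ) - 3)) := by
    unfold Pr
    rw [show n - 2 = (n - 3) + 1 by omega, Finset.prod_range_succ]
    have : ((n - 3 : ℕ) : ℤ) = (n : ℤ) - 3 := by omega
    rw [this]
  linear_combination (a + (i : ℤ) - 3) * hPr

lemma Gsum (m : ℕ) : ∀ a b : ℤ, ∑ k ∈ range m, (a + (k : ℤ)) * (b + (m : ℤ) - 1 - k)
    = (m : ℤ) * a * b + (m.choose 2 : ℤ) * (a + b) + (m.choose 3 : ℤ) := by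
  induction m with
  | zero => intro a b; simp
  | succ m ih =>
    intro a b
    rw [Finset.sum_range_succ]
    have hre : ∑ k ∈ range m, (a + (k : ℤ)) * (b + ((m + 1 : ℕ) : ℤ) - 1 - k)
        = ∑ k ∈ range m, (a + (k : ℤ)) * ((b + 1) + (m : ℤ) - 1 - k) := by
      apply Finset.sum_congr rfl
      intro k _
      push_cast
      ring
    rw [hre, ih a (b + 1)]
    have hc2 : (((m + 1).choose 2 : ℕ) : ℤ) = (m.choose 2 : ℤ) + (m : ℤ) := by
      have h := Nat.choose_succ_succ m 1
      rw [h, Nat.choose_one_right]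
      push_cast
      ring
    have hc3 : (((m + 1).choose 3 : ℕ) : ℤ) = (m.choose 3 : ℤ) + (m.choose 2 : ℤ) := by
      have h := Nat.choose_succ_succ m 2
      rw [h]
      push_cast
      ring
    rw [hc2, hc3]
    push_cast
    ring


/-- for `n ≥ 3`, summing over `3 ≤ i ≤ n` and linked
partitions in which `i` is a destination, `i-1` is not a destination and
`(i-1, i)` is not an arc,
`∑ a^{one τ} b^{os τ - 1} = ((n-2)ab + C(n-2,2)(a+b) + C(n-2,3)) (a+b)_{n-3}`. -/
theorem lp_L_enumeration (n : ℕ) (hn : 3 ≤ n) (a b : ℤ) :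
    ∑ i ∈ Finset.Icc 3 n,
        ∑ A ∈ (LP n).filter
            (fun A => IsDest A i ∧ ¬ IsDest A (i - 1) ∧ (i - 1, i) ∉ A),
          a ^ oneL A * b ^ (osL n A - 1) =
      (((n : ℤ) - 2) * a * b + ((n - 2).choose 2 : ℤ) * (a + b) +
          ((n - 2).choose 3 : ℤ)) *
        (ascPochhammer ℤ (n - 3)).eval (a + b) := by
  have hstep : ∀ i ∈ Icc 3 n,
      ∑ A ∈ (LP n).filter
          (fun A => IsDest A i ∧ ¬ IsDest A (i - 1) ∧ (i - 1, i) ∉ A),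
        a ^ oneL A * b ^ (osL n A - 1)
      = (a + (i : ℤ) - 3) * (b + (n : ℤ) - i) * Pr (a + b) (n - 3) := by
    intro i hi
    simp only [mem_Icc] at hi
    exact Si hi.1 hi.2 a b
  rw [Finset.sum_congr rfl hstep, ← Finset.sum_mul, pochh_eq]
  congr 1
  have hIcc : Icc 3 n = Ico 3 (n + 1) := by
    ext k; simp only [mem_Icc, mem_Ico]; omega
  rw [hIcc, Finset.sum_Ico_eq_sum_range, show n + 1 - 3 = n - 2 by omega]
  have hterm : ∀ k ∈ range (n - 2),
      (a + ((3 + k : ℕ) : ℤ) - 3) * (b + (n : ℤ) - ((3 + k : ℕ) : ℤ))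
      = (a + (k : ℤ)) * (b + ((n - 2 : ℕ) : ℤ) - 1 - k) := by
    intro k _
    have : ((n - 2 : ℕ) : ℤ) = (n : ℤ) - 2 := by omega
    rw [this]
    push_cast
    ring
  rw [Finset.sum_congr rfl hterm, Gsum (n - 2) a b]
  have h1 : (((n - 2 : ℕ) : ℕ) : ℤ) = (n : ℤ) - 2 := by omega
  rw [h1]
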